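/- arXiv:2005.14323 — 4 statements merged into one kernel-verified Lean document; each statement's English description precedes it below -/
import Mathlib

section
/- Let X, Y be Hilbert spaces and T : X → Y a bounded linear operator. Suppose for every ε > 0 there exist a Hilbert space Z_ε, a compact linear operator S_ε : X → Z_ε, and a constant C_ε > 0 such that ‖Tx‖ ≤ ε‖x‖ + C_ε‖S_ε x‖ for all x ∈ X. Then T is compact. -/
/-!
Split `T x - T y = T (x - y)` for `x, y` in the unit ball: the term `ε ‖x - y‖ ≤ 2ε` is
uniformly small, and the term `C ‖S x - S y‖` is small as soon as `S x` and `S y` are close.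
So a finite `δ`-net of the totally bounded set `S (closedBall 0 1)` pulls back to points whose
images under `T` form a finite `3ε`-net of `T (closedBall 0 1)`.
-/

open Metric Set

theorem TotallyBounded.exists_finite_cover_of_dist_lt {α β γ : Type*} [PseudoMetricSpace β]
    [PseudoMetricSpace γ] {f : α → γ} {g : α → β} {s : Set α} (hg : TotallyBounded (g '' s))
    {δ ε : ℝ} (hδ : 0 < δ)
    (hfg : ∀ x ∈ s, ∀ y ∈ s, dist (g x) (g y) < δ → dist (f x) (f y) < ε) :
    ∃ t : Set γ, t.Finite ∧ f '' s ⊆ ⋃ z ∈ t, ball z ε := by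
  obtain ⟨t, hts, ht, hcover⟩ :=
    exists_subset_image_finite_and.mp (finite_approx_of_totallyBounded hg δ hδ)
  refine ⟨f '' t, ht.image f, ?_⟩
  rintro _ ⟨x, hx, rfl⟩
  obtain ⟨_, ⟨y, hy, rfl⟩, hxy⟩ := mem_iUnion₂.mp (hcover ⟨x, hx, rfl⟩)
  exact mem_biUnion (mem_image_of_mem f hy) (hfg x hx y (hts hy) hxy)

section Operator

variable {𝕜 E F G : Type*} [NontriviallyNormedField 𝕜]
  [SeminormedAddCommGroup E] [NormedSpace 𝕜 E] [SeminormedAddCommGroup F] [NormedSpace 𝕜 F]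
  [SeminormedAddCommGroup G] [NormedSpace 𝕜 G]

theorem LinearMap.dist_le_of_norm_le_add {T : E →ₗ[𝕜] F} {S : E →ₗ[𝕜] G} {ε C : ℝ}
    (hT : ∀ x, ‖T x‖ ≤ ε * ‖x‖ + C * ‖S x‖) (x y : E) :
    dist (T x) (T y) ≤ ε * dist x y + C * dist (S x) (S y) := by
  simpa only [dist_eq_norm, map_sub] using hT (x - y)

theorem LinearMap.exists_finite_cover_image_closedBall_of_norm_le_add {T : E →ₗ[𝕜] F}
    {S : E →ₗ[𝕜] G} (hS : IsCompactOperator S) {ε C : ℝ} (hε : 0 < ε) (hC : 0 < C)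
    (hT : ∀ x, ‖T x‖ ≤ ε * ‖x‖ + C * ‖S x‖) :
    ∃ t : Set F, t.Finite ∧ T '' closedBall 0 1 ⊆ ⋃ z ∈ t, ball z (3 * ε) := by
  obtain ⟨K, hK, hSK⟩ := hS.image_closedBall_subset_compact 1
  refine (hK.totallyBounded.subset hSK).exists_finite_cover_of_dist_lt (div_pos hε hC) ?_
  intro x hx y hy hxy
  have hdist : dist x y ≤ 2 :=
    (dist_triangle_right x y 0).trans (by linarith [mem_closedBall.mp hx, mem_closedBall.mp hy])
  calc dist (T x) (T y) ≤ ε * dist x y + C * dist (S x) (S y) := dist_le_of_norm_le_add hT x y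
    _ < ε * 2 + C * (ε / C) := add_lt_add_of_le_of_lt (by gcongr) (by gcongr)
    _ = 3 * ε := by field_simp; ring

theorem LinearMap.isCompactOperator_of_forall_norm_le_add.{w} [CompleteSpace F]
    (T : E →ₗ[𝕜] F)
    (h : ∀ ε > (0 : ℝ), ∃ (G : Type w) (_ : SeminormedAddCommGroup G) (_ : NormedSpace 𝕜 G)
      (S : E →ₗ[𝕜] G) (C : ℝ), IsCompactOperator S ∧ 0 < C ∧
      ∀ x, ‖T x‖ ≤ ε * ‖x‖ + C * ‖S x‖) :
    IsCompactOperator T := by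
  have hT : TotallyBounded (T '' closedBall 0 1) := by
    refine totallyBounded_iff.mpr fun δ hδ ↦ ?_
    obtain ⟨G, _, _, S, C, hS, hC, hTS⟩ := h (δ / 3) (by positivity)
    simpa only [mul_div_cancel₀ δ three_ne_zero] using
      exists_finite_cover_image_closedBall_of_norm_le_add hS (by positivity) hC hTS
  exact (isCompactOperator_iff_image_closedBall_subset_compact T one_pos).mpr
    ⟨_, hT.closure.isCompact_of_isClosed isClosed_closure, subset_closure⟩

end Operator

theorem stmt2_general {X Y : Type*} [NormedAddCommGroup X] [InnerProductSpace ℂ X]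
    [NormedAddCommGroup Y] [InnerProductSpace ℂ Y] [CompleteSpace Y]
    (T : X →L[ℂ] Y)
    (h : ∀ ε > (0 : ℝ), ∃ (Z : Type) (_ : NormedAddCommGroup Z) (_ : InnerProductSpace ℂ Z)
      (_ : CompleteSpace Z) (S : X →L[ℂ] Z) (C : ℝ), IsCompactOperator S ∧ 0 < C ∧
      ∀ x : X, ‖T x‖ ≤ ε * ‖x‖ + C * ‖S x‖) :
    IsCompactOperator T :=
  (T : X →ₗ[ℂ] Y).isCompactOperator_of_forall_norm_le_add fun ε hε ↦ by
    obtain ⟨Z, _, _, _, S, C, hS, hC, hTS⟩ := h ε hε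
    exact ⟨Z, inferInstance, inferInstance, S, C, hS, hC, hTS⟩

/-- If `T : X → Y` is a bounded operator between Hilbert spaces such that for every `ε > 0`
there are a Hilbert space `Z`, a compact operator `S : X → Z` and a constant `C > 0` with
`‖Tx‖ ≤ ε‖x‖ + C‖Sx‖` for all `x`, then `T` is compact. -/
theorem stmt2 {X Y : Type*} [NormedAddCommGroup X] [InnerProductSpace ℂ X] [CompleteSpace X]
    [NormedAddCommGroup Y] [InnerProductSpace ℂ Y] [CompleteSpace Y]
    (T : X →L[ℂ] Y)
    (h : ∀ ε > (0 : ℝ), ∃ (Z : Type) (_ : NormedAddCommGroup Z) (_ : InnerProductSpace ℂ Z)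
      (_ : CompleteSpace Z) (S : X →L[ℂ] Z) (C : ℝ), IsCompactOperator S ∧ 0 < C ∧
      ∀ x : X, ‖T x‖ ≤ ε * ‖x‖ + C * ‖S x‖) :
    IsCompactOperator T :=
  stmt2_general T h
end

section
/- Let Ω ⊆ ℂⁿ be a bounded convex domain and ψ : 𝔻^q → ∂Ω a holomorphic map (𝔻 the unit disc in ℂ, 1 ≤ q ≤ n−1) whose image is contained in the boundary of Ω. Then the convex hull of ψ(𝔻^q) is contained in ∂Ω. -/
/-!
Let `p = ψ c` be a point of the image. Since `Ω` is open and convex and `p ∉ Ω`, Hahn–Banach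
gives a complex functional `L` with `re L < re L p` on `Ω`, hence `re L ≤ re L p` on `closure Ω`.
So the pluriharmonic function `re (L ∘ ψ)` attains its maximum at `c`, and by the maximum
principle it is constant. The image therefore lies in the real hyperplane `{re L = re L p}`,
and so does its convex hull, which is also contained in `closure Ω`; as the hyperplane misses
`Ω`, the hull lies in `closure Ω \ Ω = ∂Ω`.
-/

open Bornology Set Function

theorem Complex.eqOn_re_of_isPreconnected_of_isMaxOn_re {F : Type*} [NormedAddCommGroup F]
    [NormedSpace ℂ F] {g : F → ℂ} {U : Set F} {c : F} (hU : IsPreconnected U) (hUo : IsOpen U)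
    (hg : DifferentiableOn ℂ g U) (hcU : c ∈ U) (hmax : IsMaxOn (fun z ↦ (g z).re) U c) :
    EqOn (fun z ↦ (g z).re) (const F (g c).re) U := by
  have hexp : IsMaxOn (norm ∘ fun z ↦ exp (g z)) U c := fun z hz ↦ by
    simpa only [mem_ofPred_eq, comp_apply, norm_exp, Real.exp_le_exp] using hmax hz
  intro z hz
  have := congrArg norm (eqOn_of_isPreconnected_of_isMaxOn_norm hU hUo hg.cexp hcU hexp hz)
  simpa only [const_apply, norm_exp, Real.exp_eq_exp] using this

theorem convexHull_subset_frontier_of_subset_hyperplane {E : Type*} [AddCommGroup E]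
    [Module ℝ E] [TopologicalSpace E] [IsTopologicalAddGroup E] [ContinuousSMul ℝ E]
    {Ω S : Set E} (hΩo : IsOpen Ω) (hΩc : Convex ℝ Ω) (hS : S ⊆ closure Ω) (f : E →ₗ[ℝ] ℝ)
    {a : ℝ} (hfΩ : ∀ x ∈ Ω, f x < a) (hfS : ∀ y ∈ S, f y = a) :
    convexHull ℝ S ⊆ frontier Ω := by
  intro x hx
  have hxa : f x = a := convexHull_min hfS (convex_hyperplane f.isLinear a) hx
  rw [hΩo.frontier_eq]
  exact ⟨convexHull_min hS hΩc.closure hx, fun hxΩ ↦ (hfΩ x hxΩ).ne hxa⟩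

theorem convexHull_image_subset_frontier {E F : Type*} [NormedAddCommGroup E] [NormedSpace ℂ E]
    [NormedAddCommGroup F] [NormedSpace ℂ F] {Ω : Set E} (hΩo : IsOpen Ω) (hΩc : Convex ℝ Ω)
    {U : Set F} (hUo : IsOpen U) (hU : IsPreconnected U) {ψ : F → E}
    (hψ : DifferentiableOn ℂ ψ U) (him : ψ '' U ⊆ frontier Ω) :
    convexHull ℝ (ψ '' U) ⊆ frontier Ω := by
  rcases U.eq_empty_or_nonempty with rfl | ⟨c, hcU⟩
  · simp
  have hpΩ : ψ c ∉ Ω := ((hΩo.frontier_eq ▸ him (mem_image_of_mem ψ hcU)) :).2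
  obtain ⟨L, hL⟩ := RCLike.geometric_hahn_banach_open_point (𝕜 := ℂ) hΩc hΩo hpΩ
  have hLcl : ∀ y ∈ closure Ω, (L y).re ≤ (L (ψ c)).re := fun y hy ↦
    closure_lt_subset_le (f := fun y ↦ (L y).re) (by fun_prop) continuous_const
      (closure_mono (fun x hx ↦ hL x hx) hy)
  have hmax : IsMaxOn (fun z ↦ (L (ψ z)).re) U c := fun z hz ↦
    hLcl _ (him (mem_image_of_mem ψ hz)).1
  have hconst := Complex.eqOn_re_of_isPreconnected_of_isMaxOn_re hU hUo
    (L.differentiable.comp_differentiableOn hψ) hcU hmax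
  refine convexHull_subset_frontier_of_subset_hyperplane hΩo hΩc
    (fun y hy ↦ (him hy).1) (Complex.reLm.comp (L.toLinearMap.restrictScalars ℝ)) hL ?_
  rintro _ ⟨z, hz, rfl⟩
  exact hconst hz

theorem stmt5_general {n q : ℕ}
    (Ω : Set (EuclideanSpace ℂ (Fin n))) (hΩo : IsOpen Ω)
    (hΩc : Convex ℝ Ω)
    (ψ : (Fin q → ℂ) → EuclideanSpace ℂ (Fin n))
    (hψ : DifferentiableOn ℂ ψ {z : Fin q → ℂ | ∀ i, ‖z i‖ < 1})
    (him : ψ '' {z : Fin q → ℂ | ∀ i, ‖z i‖ < 1} ⊆ frontier Ω) :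
    convexHull ℝ (ψ '' {z : Fin q → ℂ | ∀ i, ‖z i‖ < 1}) ⊆ frontier Ω := by
  have hD : {z : Fin q → ℂ | ∀ i, ‖z i‖ < 1} = Metric.ball 0 1 := by
    ext z
    simp only [mem_ofPred_eq, mem_ball_zero_iff, pi_norm_lt_iff zero_lt_one]
  rw [hD] at hψ him ⊢
  exact convexHull_image_subset_frontier hΩo hΩc Metric.isOpen_ball
    (convex_ball 0 1).isPreconnected hψ him

/-- If `Ω ⊆ ℂⁿ` is a bounded convex domain and `ψ : 𝔻^q → ∂Ω` is holomorphic on the unit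
polydisc with image in the boundary of `Ω`, then the convex hull of `ψ(𝔻^q)` is contained
in `∂Ω`. -/
theorem stmt5 {n q : ℕ} (hq : 1 ≤ q) (hqn : q ≤ n - 1)
    (Ω : Set (EuclideanSpace ℂ (Fin n))) (hΩo : IsOpen Ω) (hΩne : Ω.Nonempty)
    (hΩb : IsBounded Ω) (hΩc : Convex ℝ Ω)
    (ψ : (Fin q → ℂ) → EuclideanSpace ℂ (Fin n))
    (hψ : DifferentiableOn ℂ ψ {z : Fin q → ℂ | ∀ i, ‖z i‖ < 1})
    (him : ψ '' {z : Fin q → ℂ | ∀ i, ‖z i‖ < 1} ⊆ frontier Ω) :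
    convexHull ℝ (ψ '' {z : Fin q → ℂ | ∀ i, ‖z i‖ < 1}) ⊆ frontier Ω :=
  stmt5_general Ω hΩo hΩc ψ hψ him
end

section
/- Let Ω ⊆ ℂⁿ be a bounded convex domain whose boundary is C¹-smooth. Suppose V₁ and V₂ are complex affine varieties contained in ∂Ω (each relatively open in some complex affine subspace) whose relative closures share a common point Q. Then there is a single complex affine subspace L with Q ∈ L such that both V₁ and V₂ are contained in L ∩ ∂Ω; in particular V₁ ∪ V₂ is contained in the intersection of ∂Ω with the complex tangent space T^ℂ_Q(∂Ω). -/
/-!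
`ρ` vanishes on the relatively open piece `U ∩ A` of the complex affine subspace `A`, so `dρ` kills
the direction of `A` at every point of `U ∩ A`. Since `dρ` is continuous, it still does at every
point `Q` of the closure, and `z - Q`, `i • (z - Q)` lie in that direction because `Q ∈ A` (`A` is
closed). The common affine subspace is simply the affine span of `Q`, `V₁` and `V₂`.
-/

open Bornology Topology

section RelativelyOpen

variable {𝕜 E : Type*} [NontriviallyNormedField 𝕜] [NormedAlgebra ℝ 𝕜]
  [NormedAddCommGroup E] [NormedSpace 𝕜 E] [NormedSpace ℝ E] [IsScalarTower ℝ 𝕜 E]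
  {U : Set E} {A : AffineSubspace 𝕜 E}

theorem eventually_add_smul_mem_inter (hU : IsOpen U) {z v : E} (hz : z ∈ U ∩ (A : Set E))
    (hv : v ∈ A.direction) : ∀ᶠ t : ℝ in 𝓝 0, z + t • v ∈ U ∩ (A : Set E) := by
  have hline : Continuous fun t : ℝ => z + t • v := by fun_prop
  have hU' : ∀ᶠ t : ℝ in 𝓝 0, z + t • v ∈ U :=
    hline.continuousAt.preimage_mem_nhds (by simpa using hU.mem_nhds hz.1)
  filter_upwards [hU'] with t ht
  refine ⟨ht, ?_⟩
  rw [← algebraMap_smul 𝕜 t v, add_comm]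
  exact AffineSubspace.vadd_mem_of_mem_direction (A.direction.smul_mem _ hv) hz.2

variable {F : Type*} [NormedAddCommGroup F] [NormedSpace ℝ F] {f : E → F}

theorem fderiv_apply_eq_zero_of_eqOn_inter (hU : IsOpen U) (hf0 : ∀ x ∈ U ∩ (A : Set E), f x = 0)
    {z v : E} (hz : z ∈ U ∩ (A : Set E)) (hfz : DifferentiableAt ℝ f z) (hv : v ∈ A.direction) :
    fderiv ℝ f z v = 0 := by
  have hline : (fun t : ℝ => f (z + t • v)) =ᶠ[𝓝 0] fun _ => 0 :=
    (eventually_add_smul_mem_inter hU hz hv).mono fun t ht => hf0 _ ht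
  rw [← hfz.lineDeriv_eq_fderiv, lineDeriv, hline.deriv_eq, deriv_const]

theorem fderiv_apply_eq_zero_of_mem_closure_inter (hU : IsOpen U) (hf : ContDiff ℝ 1 f)
    (hf0 : ∀ x ∈ U ∩ (A : Set E), f x = 0) {Q v : E} (hQ : Q ∈ closure (U ∩ (A : Set E)))
    (hv : v ∈ A.direction) : fderiv ℝ f Q v = 0 := by
  have hclosed : IsClosed {x | fderiv ℝ f x v = 0} :=
    isClosed_eq ((hf.continuous_fderiv one_ne_zero).clm_apply continuous_const) continuous_const
  refine closure_minimal (fun z hz => ?_) hclosed hQ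
  exact fderiv_apply_eq_zero_of_eqOn_inter hU hf0 hz (hf.differentiable one_ne_zero z) hv

end RelativelyOpen

theorem fderiv_sub_eq_zero_and_fderiv_I_smul_sub_eq_zero {E F : Type*} [NormedAddCommGroup E]
    [NormedSpace ℂ E] [FiniteDimensional ℂ E] [NormedAddCommGroup F] [NormedSpace ℝ F]
    {f : E → F} {U : Set E} {A : AffineSubspace ℂ E} (hU : IsOpen U) (hf : ContDiff ℝ 1 f)
    (hf0 : ∀ x ∈ U ∩ (A : Set E), f x = 0) {Q z : E} (hQ : Q ∈ closure (U ∩ (A : Set E)))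
    (hz : z ∈ U ∩ (A : Set E)) :
    fderiv ℝ f Q (z - Q) = 0 ∧ fderiv ℝ f Q (Complex.I • (z - Q)) = 0 := by
  have hQA : Q ∈ A :=
    closure_minimal Set.inter_subset_right A.closed_of_finiteDimensional hQ
  have hdir : z - Q ∈ A.direction := A.vsub_mem_direction hz.2 hQA
  exact ⟨fderiv_apply_eq_zero_of_mem_closure_inter hU hf hf0 hQ hdir,
    fderiv_apply_eq_zero_of_mem_closure_inter hU hf hf0 hQ (A.direction.smul_mem _ hdir)⟩

theorem stmt8_general {n : ℕ} (Ω : Set (EuclideanSpace ℂ (Fin n)))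
    (ρ : EuclideanSpace ℂ (Fin n) → ℝ) (hρ : ContDiff ℝ 1 ρ)
    (hfr : frontier Ω = {z | ρ z = 0})
    (V₁ V₂ : Set (EuclideanSpace ℂ (Fin n)))
    (A₁ A₂ : AffineSubspace ℂ (EuclideanSpace ℂ (Fin n)))
    (hV₁o : ∃ U : Set (EuclideanSpace ℂ (Fin n)), IsOpen U ∧ V₁ = U ∩ (A₁ : Set _))
    (hV₂o : ∃ U : Set (EuclideanSpace ℂ (Fin n)), IsOpen U ∧ V₂ = U ∩ (A₂ : Set _))
    (hV₁b : V₁ ⊆ frontier Ω) (hV₂b : V₂ ⊆ frontier Ω)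
    (Q : EuclideanSpace ℂ (Fin n)) (hQ : Q ∈ closure V₁ ∩ closure V₂) :
    ∃ L : AffineSubspace ℂ (EuclideanSpace ℂ (Fin n)), Q ∈ L ∧
      V₁ ∪ V₂ ⊆ (L : Set _) ∩ frontier Ω ∧
      V₁ ∪ V₂ ⊆ {z | fderiv ℝ ρ Q (z - Q) = 0 ∧ fderiv ℝ ρ Q (Complex.I • (z - Q)) = 0} := by
  have tangent : ∀ {V : Set (EuclideanSpace ℂ (Fin n))} {A : AffineSubspace ℂ (EuclideanSpace ℂ (Fin n))},
      (∃ U, IsOpen U ∧ V = U ∩ (A : Set _)) → V ⊆ frontier Ω → Q ∈ closure V →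
      ∀ z ∈ V, fderiv ℝ ρ Q (z - Q) = 0 ∧ fderiv ℝ ρ Q (Complex.I • (z - Q)) = 0 := by
    rintro V A ⟨U, hU, rfl⟩ hVb hQV z hz
    exact fderiv_sub_eq_zero_and_fderiv_I_smul_sub_eq_zero hU hρ
      (fun x hx => by simpa [hfr] using hVb hx) hQV hz
  refine ⟨affineSpan ℂ (insert Q (V₁ ∪ V₂)), subset_affineSpan ℂ _ (Set.mem_insert _ _),
    fun z hz => ⟨subset_affineSpan ℂ _ (Set.mem_insert_of_mem _ hz), hz.elim (@hV₁b z) (@hV₂b z)⟩,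
    ?_⟩
  rintro z (hz | hz)
  · exact tangent hV₁o hV₁b hQ.1 z hz
  · exact tangent hV₂o hV₂b hQ.2 z hz

/-- Let `Ω ⊆ ℂⁿ` be a bounded convex domain with `C¹` boundary (given by a `C¹` defining
function `ρ`). If `V₁, V₂` are complex affine varieties in `∂Ω` (each relatively open in a
complex affine subspace) whose closures share a point `Q`, then there is a single complex
affine subspace `L ∋ Q` with `V₁ ∪ V₂ ⊆ L ∩ ∂Ω`; in particular `V₁ ∪ V₂` lies in the complex
tangent space to `∂Ω` at `Q`. -/
theorem stmt8 {n : ℕ} (Ω : Set (EuclideanSpace ℂ (Fin n))) (hΩo : IsOpen Ω)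
    (hΩne : Ω.Nonempty) (hΩb : IsBounded Ω) (hΩc : Convex ℝ Ω)
    (ρ : EuclideanSpace ℂ (Fin n) → ℝ) (hρ : ContDiff ℝ 1 ρ)
    (hΩρ : Ω = {z | ρ z < 0}) (hfr : frontier Ω = {z | ρ z = 0})
    (hgrad : ∀ z ∈ frontier Ω, fderiv ℝ ρ z ≠ 0)
    (V₁ V₂ : Set (EuclideanSpace ℂ (Fin n)))
    (A₁ A₂ : AffineSubspace ℂ (EuclideanSpace ℂ (Fin n)))
    (hV₁o : ∃ U : Set (EuclideanSpace ℂ (Fin n)), IsOpen U ∧ V₁ = U ∩ (A₁ : Set _))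
    (hV₂o : ∃ U : Set (EuclideanSpace ℂ (Fin n)), IsOpen U ∧ V₂ = U ∩ (A₂ : Set _))
    (hV₁b : V₁ ⊆ frontier Ω) (hV₂b : V₂ ⊆ frontier Ω)
    (hV₁ne : V₁.Nonempty) (hV₂ne : V₂.Nonempty)
    (Q : EuclideanSpace ℂ (Fin n)) (hQ : Q ∈ closure V₁ ∩ closure V₂) :
    ∃ L : AffineSubspace ℂ (EuclideanSpace ℂ (Fin n)), Q ∈ L ∧
      V₁ ∪ V₂ ⊆ (L : Set _) ∩ frontier Ω ∧
      V₁ ∪ V₂ ⊆ {z | fderiv ℝ ρ Q (z - Q) = 0 ∧ fderiv ℝ ρ Q (Complex.I • (z - Q)) = 0} :=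
  stmt8_general Ω ρ hρ hfr V₁ V₂ A₁ A₂ hV₁o hV₂o hV₁b hV₂b Q hQ
end

section
/- Let Ω ⊆ ℂⁿ be a bounded convex domain, P ∈ ∂Ω, and suppose there exist holomorphic embeddings of polydiscs into ∂Ω passing through P. Among all complex affine varieties of the form (affine subspace) ∩ ∂Ω that contain P as a relative interior point, there is a unique one of maximal dimension m, with 0 ≤ m ≤ n−1, and its relative closure equals the intersection of an m-dimensional complex affine subspace through P with Ω̄. -/
open Bornology Metric Set Filter Topology

/-! An affine subspace `A ∋ P` that lies in `∂Ω` near `P` misses `Ω` altogether: otherwise the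
open segment from a point of `A ∩ Ω` to `P` lies in `Ω`, and its points near `P` lie in `A`. Two
such subspaces lie in a common real supporting hyperplane of `Ω` at `P`, and their join stays
in `Ω̄` near `P` by convexity, so the family of such subspaces is closed under `⊔`. In finite
dimension it therefore has a greatest element, which is the unique one of maximal dimension;
it is proper because it misses `Ω`, and `A ∩ Ω̄ ⊆ ∂Ω` gives its closure. -/

theorem Submodule.exists_linearMap_fst_add_snd_eq {K V : Type*} [DivisionRing K]
    [AddCommGroup V] [Module K V] (p q : Submodule K V) :
    ∃ π : V →ₗ[K] p × q, ∀ x ∈ p ⊔ q, ((π x).1 : V) + (π x).2 = x := by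
  set T := p.subtype.coprod q.subtype
  have hrange : LinearMap.range T = p ⊔ q := by
    rw [LinearMap.range_coprod, Submodule.range_subtype, Submodule.range_subtype]
  obtain ⟨σ, hσ⟩ := T.rangeRestrict.exists_rightInverse_of_surjective T.range_rangeRestrict
  obtain ⟨π, hπ⟩ := LinearMap.exists_extend σ
  refine ⟨π, fun x hx => ?_⟩
  rw [← hrange] at hx
  have hπx : π x = σ ⟨x, hx⟩ := LinearMap.congr_fun hπ ⟨x, hx⟩
  have hTσ : T (σ ⟨x, hx⟩) = x := congrArg Subtype.val (LinearMap.congr_fun hσ ⟨x, hx⟩)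
  rw [hπx]
  exact hTσ

theorem AffineSubspace.exists_isGreatest_of_sup_mem {k V P : Type*} [DivisionRing k]
    [AddCommGroup V] [Module k V] [AddTorsor V P] [FiniteDimensional k V]
    (S : Set (AffineSubspace k P)) (p : P) (hS : S.Nonempty) (hp : ∀ A ∈ S, p ∈ A)
    (hsup : ∀ A ∈ S, ∀ B ∈ S, A ⊔ B ∈ S) : ∃ A, IsGreatest S A := by
  obtain ⟨_, ⟨A, hA, rfl⟩, hmax⟩ := wellFounded_gt.has_min (direction '' S) (hS.image _)
  refine ⟨A, hA, fun B hB => ?_⟩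
  have hle : A ≤ A ⊔ B := le_sup_left
  have hdir : A.direction = (A ⊔ B).direction :=
    (direction_le hle).eq_of_not_lt (hmax _ ⟨_, hsup A hA B hB, rfl⟩)
  exact le_sup_right.trans (eq_of_direction_eq_of_nonempty_of_le hdir ⟨p, hp A hA⟩ hle).ge

section

variable {𝕜 E : Type*} [NontriviallyNormedField 𝕜] [NormedAddCommGroup E] [NormedSpace 𝕜 E]
  {P : E} {A B : AffineSubspace 𝕜 E}

theorem AffineSubspace.tendsto_add_nhdsWithin {X : Type*} [TopologicalSpace X] {g : X → E}
    {x₀ : X} (hg : ContinuousAt g x₀) (hg₀ : g x₀ = 0) (hgA : ∀ x, g x ∈ A.direction)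
    (hPA : P ∈ A) : Tendsto (fun x => g x + P) (𝓝 x₀) (𝓝[A] P) := by
  refine tendsto_nhdsWithin_iff.2 ⟨?_, Eventually.of_forall fun x =>
    AffineSubspace.vadd_mem_of_mem_direction (hgA x) hPA⟩
  simpa [hg₀] using hg.tendsto.add_const P

variable [NormedAlgebra ℝ 𝕜] [NormedSpace ℝ E] [IsScalarTower ℝ 𝕜 E] {Ω : Set E}

theorem LinearMap.eq_zero_of_isLocalMaxOn (f : E →ₗ[ℝ] ℝ) (hf : IsLocalMaxOn f A P)
    (hPA : P ∈ A) {v : E} (hv : v ∈ A.direction) : f v = 0 := by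
  have hline : IsLocalMax (fun t : ℝ => t * f v + f P) 0 := by
    filter_upwards [(AffineSubspace.tendsto_add_nhdsWithin (g := fun t : ℝ => t • v) (x₀ := 0)
      (by fun_prop) (zero_smul ℝ v) (fun t => A.direction.smul_of_tower_mem t hv) hPA).eventually
      hf] with t ht
    simpa using ht
  simpa using hline.hasDerivAt_eq_zero (((hasDerivAt_id 0).mul_const (f v)).add_const (f P))

theorem disjoint_of_frontier_mem_nhdsWithin (hΩo : IsOpen Ω) (hΩc : Convex ℝ Ω)
    (hP : P ∈ closure Ω) (hPA : P ∈ A) (hA : frontier Ω ∈ 𝓝[A] P) :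
    Disjoint (A : Set E) Ω := by
  refine disjoint_left.2 fun x hxA hxΩ => ?_
  have hseg : ∀ t ∈ Ioo (0 : ℝ) 1, t • (x - P) + P ∈ Ω := fun t ht => by
    have hmem : t • (x - P) + P ∈ openSegment ℝ x P :=
      ⟨t, 1 - t, ht.1, by linarith [ht.2], by ring, by module⟩
    have h := hΩc.openSegment_interior_closure_subset_interior (by rwa [hΩo.interior_eq]) hP hmem
    rwa [hΩo.interior_eq] at h
  have hfr : ∀ᶠ t in 𝓝[>] (0 : ℝ), t • (x - P) + P ∈ frontier Ω :=
    ((AffineSubspace.tendsto_add_nhdsWithin (g := fun t : ℝ => t • (x - P)) (x₀ := 0)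
      (by fun_prop) (zero_smul ℝ _)
      (fun t => A.direction.smul_of_tower_mem t (A.vsub_mem_direction hxA hPA)) hPA).mono_left
      nhdsWithin_le_nhds).eventually_mem hA
  have hIoo : ∀ᶠ t in 𝓝[>] (0 : ℝ), t ∈ Ioo 0 1 := Ioo_mem_nhdsGT one_pos
  obtain ⟨t, ht, htfr⟩ := (hIoo.and hfr).exists
  exact (hΩo.frontier_eq ▸ htfr).2 (hseg t ht)

/-- Each point `x` of `A ⊔ B` near `P` is the midpoint of points of `A` and `B` near `P`,
chosen continuously in `x`. -/
theorem Convex.mem_nhdsWithin_sup [CompleteSpace 𝕜] [FiniteDimensional 𝕜 E] {s : Set E}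
    (hs : Convex ℝ s) (hPA : P ∈ A) (hPB : P ∈ B) (hA : s ∈ 𝓝[A] P) (hB : s ∈ 𝓝[B] P) :
    s ∈ 𝓝[(A ⊔ B : AffineSubspace 𝕜 E)] P := by
  obtain ⟨π, hπ⟩ := A.direction.exists_linearMap_fst_add_snd_eq B.direction
  have hπc : Continuous π := π.continuous_of_finiteDimensional
  have hA' : ∀ᶠ x in 𝓝 P, (2 : ℝ) • ((π (x - P)).1 : E) + P ∈ s :=
    (AffineSubspace.tendsto_add_nhdsWithin (by fun_prop) (by simp)
      (fun x => A.direction.smul_of_tower_mem _ (π (x - P)).1.2) hPA).eventually_mem hA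
  have hB' : ∀ᶠ x in 𝓝 P, (2 : ℝ) • ((π (x - P)).2 : E) + P ∈ s :=
    (AffineSubspace.tendsto_add_nhdsWithin (by fun_prop) (by simp)
      (fun x => B.direction.smul_of_tower_mem _ (π (x - P)).2.2) hPB).eventually_mem hB
  filter_upwards [self_mem_nhdsWithin, nhdsWithin_le_nhds hA', nhdsWithin_le_nhds hB']
    with x hx ha hb
  have hsum := hπ (x - P) (AffineSubspace.direction_sup_eq_sup_direction hPA hPB ▸
    AffineSubspace.vsub_mem_direction hx (le_sup_left (a := A) hPA))
  set a : E := ((π (x - P)).1 : E)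
  set b : E := ((π (x - P)).2 : E)
  have hx_mid : x = (1 / 2 : ℝ) • ((2 : ℝ) • a + P) + (1 / 2 : ℝ) • ((2 : ℝ) • b + P) :=
    calc x = (a + b) + P := by rw [hsum]; abel
      _ = _ := by module
  rw [hx_mid]
  exact hs ha hb (by norm_num) (by norm_num) (by norm_num)

/-- Both `A` and `B` lie in the supporting hyperplane `{f = f P}` of `Ω`, hence so does
`A ⊔ B`. -/
theorem frontier_mem_nhdsWithin_sup [CompleteSpace 𝕜] [FiniteDimensional 𝕜 E]
    (hΩo : IsOpen Ω) (hΩc : Convex ℝ Ω) (hP : P ∈ frontier Ω) (hPA : P ∈ A) (hPB : P ∈ B)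
    (hA : frontier Ω ∈ 𝓝[A] P) (hB : frontier Ω ∈ 𝓝[B] P) :
    frontier Ω ∈ 𝓝[(A ⊔ B : AffineSubspace 𝕜 E)] P := by
  rw [hΩo.frontier_eq] at hP hA hB ⊢
  obtain ⟨f, hf⟩ := geometric_hahn_banach_open_point hΩc hΩo hP.2
  have hf_closure : ∀ x ∈ closure Ω, f x ≤ f P := fun x hx =>
    closure_minimal (fun y hy => (hf y hy).le) (isClosed_le f.continuous continuous_const) hx
  have hf_dir : ∀ C : AffineSubspace 𝕜 E, P ∈ C → closure Ω \ Ω ∈ 𝓝[C] P →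
      ∀ v ∈ C.direction, f v = 0 := fun C hPC hC v hv =>
    (f : E →ₗ[ℝ] ℝ).eq_zero_of_isLocalMaxOn
      (mem_of_superset hC fun x hx => hf_closure x hx.1) hPC hv
  have hf_sup : ∀ x ∈ (A ⊔ B : AffineSubspace 𝕜 E), f x = f P := fun x hx => by
    obtain ⟨a, ha, b, hb, hab⟩ := Submodule.mem_sup.1
      (AffineSubspace.direction_sup_eq_sup_direction hPA hPB ▸
        AffineSubspace.vsub_mem_direction hx (le_sup_left (a := A) hPA))
    have hxP : f (x - P) = 0 := by
      rw [← vsub_eq_sub, ← hab, map_add, hf_dir A hPA hA a ha, hf_dir B hPB hB b hb, add_zero]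
    rw [map_sub, sub_eq_zero] at hxP
    exact hxP
  filter_upwards [hΩc.closure.mem_nhdsWithin_sup hPA hPB (mem_of_superset hA sdiff_subset)
    (mem_of_superset hB sdiff_subset), self_mem_nhdsWithin] with x hx_closure hx
  exact ⟨hx_closure, fun hxΩ => (hf x hxΩ).ne (hf_sup x hx)⟩

end

theorem stmt15_general {n : ℕ} (Ω : Set (EuclideanSpace ℂ (Fin n))) (hΩo : IsOpen Ω)
    (hΩc : Convex ℝ Ω)
    (P : EuclideanSpace ℂ (Fin n)) (hP : P ∈ frontier Ω) :
    ∃! A : AffineSubspace ℂ (EuclideanSpace ℂ (Fin n)),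
      P ∈ A ∧
      (∃ r > (0 : ℝ), (A : Set _) ∩ ball P r ⊆ frontier Ω) ∧
      Module.finrank ℂ A.direction ≤ n - 1 ∧
      (∀ A' : AffineSubspace ℂ (EuclideanSpace ℂ (Fin n)), P ∈ A' →
        (∃ r > (0 : ℝ), (A' : Set _) ∩ ball P r ⊆ frontier Ω) →
        Module.finrank ℂ A'.direction ≤ Module.finrank ℂ A.direction) ∧
      closure ((A : Set _) ∩ frontier Ω) = (A : Set _) ∩ closure Ω := by
  have hball : ∀ A : AffineSubspace ℂ (EuclideanSpace ℂ (Fin n)),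
      (∃ r > (0 : ℝ), (A : Set _) ∩ ball P r ⊆ frontier Ω) ↔ frontier Ω ∈ 𝓝[A] P := fun A => by
    simp only [Metric.mem_nhdsWithin_iff, inter_comm]
  obtain ⟨A, ⟨hPA, hA⟩, hgreatest⟩ := AffineSubspace.exists_isGreatest_of_sup_mem
    {A | P ∈ A ∧ frontier Ω ∈ 𝓝[A] P} P
    ⟨affineSpan ℂ {P}, mem_affineSpan ℂ rfl, by
      simpa [AffineSubspace.coe_affineSpan_singleton] using hP⟩
    (fun _ hA => hA.1) fun A hA B hB =>
      ⟨le_sup_left (a := A) hA.1, frontier_mem_nhdsWithin_sup hΩo hΩc hP hA.1 hB.1 hA.2 hB.2⟩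
  have hdisj := disjoint_of_frontier_mem_nhdsWithin hΩo hΩc (frontier_subset_closure hP) hPA hA
  have hA_ne_top : A.direction ≠ ⊤ := by
    rw [Ne, AffineSubspace.direction_eq_top_iff_of_nonempty ⟨P, hPA⟩]
    rintro rfl
    rw [AffineSubspace.top_coe, univ_disjoint] at hdisj
    simpa [hdisj] using frontier_subset_closure hP
  refine ⟨A, ⟨hPA, (hball A).2 hA, ?_, fun A' hPA' hA' => ?_, ?_⟩, ?_⟩
  · have := Submodule.finrank_lt hA_ne_top
    rw [finrank_euclideanSpace_fin] at this
    omega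
  · exact Submodule.finrank_mono (AffineSubspace.direction_le (hgreatest ⟨hPA', (hball A').1 hA'⟩))
  · refine (closure_minimal (inter_subset_inter_right _ frontier_subset_closure)
      (A.closed_of_finiteDimensional.inter isClosed_closure)).antisymm fun x hx => ?_
    exact subset_closure ⟨hx.1, hΩo.frontier_eq ▸ ⟨hx.2, disjoint_left.1 hdisj hx.1⟩⟩
  · rintro A' ⟨hPA', hA', -, hmax', -⟩
    have hle : A' ≤ A := hgreatest ⟨hPA', (hball A').1 hA'⟩
    exact AffineSubspace.eq_of_direction_eq_of_nonempty_of_le (Submodule.eq_of_le_of_finrank_le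
      (AffineSubspace.direction_le hle) (hmax' A hPA ((hball A).2 hA))) ⟨P, hPA'⟩ hle

/-- Structure of varieties in the boundary of a bounded convex domain `Ω ⊆ ℂⁿ`: if there is a
holomorphic embedding of a polydisc into `∂Ω` through `P ∈ ∂Ω`, then among all varieties of
the form (complex affine subspace) ∩ ∂Ω having `P` as a relative interior point there is a
unique one of maximal dimension `m ≤ n−1`, and its relative closure is the intersection of
the `m`-dimensional affine subspace with `Ω̄`. -/
theorem stmt15 {n : ℕ} (hn : 1 ≤ n) (Ω : Set (EuclideanSpace ℂ (Fin n))) (hΩo : IsOpen Ω)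
    (hΩne : Ω.Nonempty) (hΩb : IsBounded Ω) (hΩc : Convex ℝ Ω)
    (P : EuclideanSpace ℂ (Fin n)) (hP : P ∈ frontier Ω)
    (hemb : ∃ q : ℕ, 1 ≤ q ∧ ∃ ψ : (Fin q → ℂ) → EuclideanSpace ℂ (Fin n),
      DifferentiableOn ℂ ψ {z : Fin q → ℂ | ∀ i, ‖z i‖ < 1} ∧
      Set.InjOn ψ {z : Fin q → ℂ | ∀ i, ‖z i‖ < 1} ∧
      ψ '' {z : Fin q → ℂ | ∀ i, ‖z i‖ < 1} ⊆ frontier Ω ∧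
      ∃ z : Fin q → ℂ, (∀ i, ‖z i‖ < 1) ∧ ψ z = P) :
    ∃! A : AffineSubspace ℂ (EuclideanSpace ℂ (Fin n)),
      P ∈ A ∧
      (∃ r > (0 : ℝ), (A : Set _) ∩ ball P r ⊆ frontier Ω) ∧
      Module.finrank ℂ A.direction ≤ n - 1 ∧
      (∀ A' : AffineSubspace ℂ (EuclideanSpace ℂ (Fin n)), P ∈ A' →
        (∃ r > (0 : ℝ), (A' : Set _) ∩ ball P r ⊆ frontier Ω) →
        Module.finrank ℂ A'.direction ≤ Module.finrank ℂ A.direction) ∧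
      closure ((A : Set _) ∩ frontier Ω) = (A : Set _) ∩ closure Ω :=
  stmt15_general Ω hΩo hΩc P hP
end
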